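/- Let (X, ‖·‖) be a quasi-Banach space and T : X → X a (b,θ)-enriched contraction. Then there exists λ ∈ (0,1] such that for any x_0 ∈ X, the Krasnoselskij iteration x_{n+1} = (1−λ)x_n + λT x_n converges to the unique fixed point p of T. -/

import Mathlib

/-!
The averaged map `S = (1 - λ) • id + λ • T` with `λ = 1 / (b + 1)` satisfies
`S x - S y = λ • (b • (x - y) + (T x - T y))`, so it is a contraction with constant `θ / (b + 1) < 1`,
and it has the same fixed points as `T`. The Banach contraction principle survives in a quasi-normed
space: an orbit of a contraction is bounded, by strong induction jumping back `J` steps at a time,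
where `C * c ^ J ≤ 1 / 2` absorbs the constant `C` of the quasi-triangle inequality; hence it is Cauchy.
-/

open Filter Topology

theorem iterate_sub_le_pow_mul {X : Type*} [Sub X] {N : X → ℝ} {S : X → X} {c : ℝ} (hc : 0 ≤ c)
    (hS : ∀ x y, N (S x - S y) ≤ c * N (x - y)) (n : ℕ) (x y : X) :
    N (S^[n] x - S^[n] y) ≤ c ^ n * N (x - y) := by
  induction n generalizing x y with
  | zero => simp
  | succ n ih =>
    rw [Function.iterate_succ_apply', Function.iterate_succ_apply', pow_succ']
    calc N (S (S^[n] x) - S (S^[n] y)) ≤ c * N (S^[n] x - S^[n] y) := hS _ _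
      _ ≤ c * (c ^ n * N (x - y)) := mul_le_mul_of_nonneg_left (ih x y) hc
      _ = c * c ^ n * N (x - y) := (mul_assoc _ _ _).symm

structure IsQuasiNorm {X : Type*} [AddCommGroup X] [Module ℝ X] (C : ℝ) (N : X → ℝ) : Prop where
  nonneg : ∀ x, 0 ≤ N x
  eq_zero_iff : ∀ x, N x = 0 ↔ x = 0
  smul : ∀ (r : ℝ) x, N (r • x) = |r| * N x
  add_le : ∀ x y, N (x + y) ≤ C * (N x + N y)

namespace IsQuasiNorm

variable {X : Type*} [AddCommGroup X] [Module ℝ X] {C c : ℝ} {N : X → ℝ} {S : X → X}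

theorem sub_comm (hN : IsQuasiNorm C N) (x y : X) : N (x - y) = N (y - x) := by
  rw [← neg_sub, ← neg_one_smul ℝ (y - x), hN.smul]
  simp

theorem eq_of_sub_eq_zero (hN : IsQuasiNorm C N) {x y : X} (h : N (x - y) = 0) : x = y :=
  sub_eq_zero.mp ((hN.eq_zero_iff _).mp h)

theorem bddAbove_orbit (hN : IsQuasiNorm C N) (hC : 1 ≤ C) (hc0 : 0 ≤ c) (hc1 : c < 1)
    (hS : ∀ x y, N (S x - S y) ≤ c * N (x - y)) (x : X) :
    ∃ B, ∀ k, N (S^[k] x - x) ≤ B := by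
  obtain ⟨J, hJ⟩ : ∃ J : ℕ, c ^ J < 1 / (2 * C) :=
    exists_pow_lt_of_lt_one (by positivity) hc1
  have hCJ : C * c ^ J ≤ 1 / 2 := by
    rw [lt_div_iff₀ (by positivity)] at hJ
    linarith
  have hJ0 : 0 < J := by
    by_contra! h
    rw [Nat.le_zero.mp h, pow_zero] at hCJ
    linarith
  obtain ⟨M, hM⟩ := ((Set.finite_le_nat J).image fun i => N (S^[i] x - x)).bddAbove
  replace hM : ∀ i ≤ J, N (S^[i] x - x) ≤ M := fun i hi => hM ⟨i, hi, rfl⟩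
  have hM0 : 0 ≤ M := (hN.nonneg _).trans (hM 0 J.zero_le)
  refine ⟨2 * C * M, fun k => ?_⟩
  induction k using Nat.strong_induction_on with
  | _ k ih =>
    rcases le_or_gt k J with hk | hk
    · nlinarith [hM k hk]
    obtain ⟨m, rfl⟩ := Nat.exists_eq_add_of_lt hk
    have hfar : N (S^[J + m + 1] x - S^[J] x) ≤ c ^ J * (2 * C * M) := by
      rw [add_assoc, Function.iterate_add_apply]
      exact (iterate_sub_le_pow_mul hc0 hS J _ x).trans
        (mul_le_mul_of_nonneg_left (ih _ (by omega)) (pow_nonneg hc0 J))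
    calc N (S^[J + m + 1] x - x)
        = N ((S^[J + m + 1] x - S^[J] x) + (S^[J] x - x)) := by rw [sub_add_sub_cancel]
      _ ≤ C * (c ^ J * (2 * C * M) + M) := by
        refine (hN.add_le _ _).trans (mul_le_mul_of_nonneg_left ?_ (by positivity))
        exact add_le_add hfar (hM J le_rfl)
      _ ≤ 2 * C * M := by
        nlinarith [mul_le_mul_of_nonneg_right hCJ (by positivity : 0 ≤ 2 * C * M)]

theorem cauchySeq_orbit (hN : IsQuasiNorm C N) (hC : 1 ≤ C) (hc0 : 0 ≤ c) (hc1 : c < 1)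
    (hS : ∀ x y, N (S x - S y) ≤ c * N (x - y)) (x : X) :
    ∀ ε > 0, ∃ n₀ : ℕ, ∀ m ≥ n₀, ∀ n ≥ n₀, N (S^[m] x - S^[n] x) < ε := by
  obtain ⟨B, hB⟩ := hN.bddAbove_orbit hC hc0 hc1 hS x
  have hsmall : ∀ n k, N (S^[n + k] x - S^[n] x) ≤ c ^ n * B := fun n k => by
    rw [Function.iterate_add_apply]
    exact (iterate_sub_le_pow_mul hc0 hS n _ x).trans
      (mul_le_mul_of_nonneg_left (hB k) (pow_nonneg hc0 n))
  intro ε hε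
  have hlim : Tendsto (fun n => c ^ n * B) atTop (𝓝 0) := by
    simpa using (tendsto_pow_atTop_nhds_zero_of_lt_one hc0 hc1).mul_const B
  obtain ⟨n₀, hn₀⟩ := eventually_atTop.mp (hlim.eventually_lt_const hε)
  refine ⟨n₀, ?_⟩
  have hle : ∀ m n, n₀ ≤ n → n ≤ m → N (S^[m] x - S^[n] x) < ε := fun m n hn hnm => by
    obtain ⟨k, rfl⟩ := Nat.exists_eq_add_of_le hnm
    exact (hsmall n k).trans_lt (hn₀ n hn)
  intro m hm n hn
  rcases le_total n m with h | h
  · exact hle m n hn h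
  · rw [hN.sub_comm]
    exact hle n m hm h

theorem fixed_of_tendsto_iterate (hN : IsQuasiNorm C N) (hC : 0 ≤ C)
    (hS : ∀ x y, N (S x - S y) ≤ c * N (x - y)) {x p : X}
    (hp : Tendsto (fun n => N (S^[n] x - p)) atTop (𝓝 0)) : S p = p := by
  have hbound : ∀ n, N (S p - p) ≤ C * (c * N (S^[n] x - p) + N (S^[n + 1] x - p)) := fun n => by
    calc N (S p - p) = N ((S p - S^[n + 1] x) + (S^[n + 1] x - p)) := by rw [sub_add_sub_cancel]
      _ ≤ C * (N (S p - S^[n + 1] x) + N (S^[n + 1] x - p)) := hN.add_le _ _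
      _ ≤ C * (c * N (S^[n] x - p) + N (S^[n + 1] x - p)) := by
        rw [Function.iterate_succ_apply', hN.sub_comm (S^[n] x) p]
        exact mul_le_mul_of_nonneg_left (add_le_add (hS _ _) le_rfl) hC
  have hlim : Tendsto (fun n => C * (c * N (S^[n] x - p) + N (S^[n + 1] x - p))) atTop (𝓝 0) := by
    simpa using ((hp.const_mul c).add (hp.comp (tendsto_add_atTop_nat 1))).const_mul C
  exact hN.eq_of_sub_eq_zero <|
    le_antisymm (ge_of_tendsto hlim (.of_forall hbound)) (hN.nonneg _)

theorem eq_of_fixed (hN : IsQuasiNorm C N) (hc1 : c < 1)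
    (hS : ∀ x y, N (S x - S y) ≤ c * N (x - y)) {p q : X} (hp : S p = p) (hq : S q = q) :
    p = q := by
  have h := hS p q
  rw [hp, hq] at h
  exact hN.eq_of_sub_eq_zero (by nlinarith [hN.nonneg (p - q)])

theorem exists_fixed_tendsto_iterate (hN : IsQuasiNorm C N) (hC : 1 ≤ C)
    (hcomplete : ∀ u : ℕ → X,
      (∀ ε > 0, ∃ n₀ : ℕ, ∀ m ≥ n₀, ∀ n ≥ n₀, N (u m - u n) < ε) →
      ∃ l : X, Tendsto (fun n => N (u n - l)) atTop (𝓝 0))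
    (hc0 : 0 ≤ c) (hc1 : c < 1) (hS : ∀ x y, N (S x - S y) ≤ c * N (x - y)) (x₀ : X) :
    ∃ p, S p = p ∧ (∀ q, S q = q → q = p) ∧
      ∀ x, Tendsto (fun n => N (S^[n] x - p)) atTop (𝓝 0) := by
  obtain ⟨p, hp⟩ := hcomplete _ (hN.cauchySeq_orbit hC hc0 hc1 hS x₀)
  have hfix : S p = p := hN.fixed_of_tendsto_iterate (by linarith) hS hp
  refine ⟨p, hfix, fun q hq => hN.eq_of_fixed hc1 hS hq hfix, fun x => ?_⟩
  have hle : ∀ n, N (S^[n] x - p) ≤ c ^ n * N (x - p) := fun n => by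
    simpa only [Function.iterate_fixed hfix n] using iterate_sub_le_pow_mul hc0 hS n x p
  exact squeeze_zero (fun n => hN.nonneg _) hle <| by
    simpa using (tendsto_pow_atTop_nhds_zero_of_lt_one hc0 hc1).mul_const (N (x - p))

end IsQuasiNorm

section Enriched

variable {X : Type*} [AddCommGroup X] [Module ℝ X]

def averagedMap (l : ℝ) (T : X → X) (x : X) : X :=
  (1 - l) • x + l • T x

theorem averagedMap_eq_self_iff {l : ℝ} (hl : l ≠ 0) {T : X → X} {x : X} :
    averagedMap l T x = x ↔ T x = x := by
  have h : averagedMap l T x - x = l • (T x - x) := by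
    simp only [averagedMap]
    module
  rw [← sub_eq_zero, h, smul_eq_zero, sub_eq_zero, or_iff_right hl]

theorem averagedMap_sub_averagedMap {b : ℝ} (hb : b + 1 ≠ 0) (T : X → X) (x y : X) :
    averagedMap (b + 1)⁻¹ T x - averagedMap (b + 1)⁻¹ T y =
      (b + 1)⁻¹ • (b • (x - y) + (T x - T y)) := by
  have h : 1 - (b + 1)⁻¹ = (b + 1)⁻¹ * b := by
    field_simp
    ring
  simp only [averagedMap, h]
  module

theorem IsQuasiNorm.averagedMap_sub_le {C b θ : ℝ} {N : X → ℝ} (hN : IsQuasiNorm C N)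
    (hb : 0 < b + 1) {T : X → X} (hT : ∀ x y, N (b • (x - y) + (T x - T y)) ≤ θ * N (x - y))
    (x y : X) :
    N (averagedMap (b + 1)⁻¹ T x - averagedMap (b + 1)⁻¹ T y) ≤ θ / (b + 1) * N (x - y) := by
  rw [averagedMap_sub_averagedMap hb.ne', hN.smul, abs_of_pos (inv_pos.mpr hb), div_eq_inv_mul,
    mul_assoc]
  exact mul_le_mul_of_nonneg_left (hT x y) (inv_nonneg.mpr hb.le)

end Enriched

/-- for a (b,θ)-enriched contraction on a quasi-Banach space, there is
λ ∈ (0,1] such that the Krasnoselskij iteration converges to the unique fixed point. -/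
theorem stmt_7 {X : Type*} [AddCommGroup X] [Module ℝ X] (Nm : X → ℝ) (C : ℝ)
    (hC : 1 ≤ C)
    (hnn : ∀ x, 0 ≤ Nm x)
    (h0 : ∀ x, Nm x = 0 ↔ x = 0)
    (h1 : ∀ (r : ℝ) (x : X), Nm (r • x) = |r| * Nm x)
    (h2 : ∀ x y, Nm (x + y) ≤ C * (Nm x + Nm y))
    (hcomplete : ∀ u : ℕ → X,
      (∀ ε > 0, ∃ N : ℕ, ∀ m ≥ N, ∀ n ≥ N, Nm (u m - u n) < ε) →
      ∃ l : X, Filter.Tendsto (fun n => Nm (u n - l)) Filter.atTop (nhds 0))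
    (T : X → X) (b θ : ℝ) (hb : 0 ≤ b) (hθ0 : 0 ≤ θ) (hθ : θ < b + 1)
    (hT : ∀ x y, Nm (b • (x - y) + (T x - T y)) ≤ θ * Nm (x - y)) :
    ∃ l : ℝ, 0 < l ∧ l ≤ 1 ∧
      ∃ p : X, T p = p ∧ (∀ q, T q = q → q = p) ∧
        ∀ xs : ℕ → X,
          (∀ n : ℕ, xs (n + 1) = (1 - l) • xs n + l • T (xs n)) →
          Filter.Tendsto (fun n => Nm (xs n - p)) Filter.atTop (nhds 0) := by
  have hN : IsQuasiNorm C Nm := ⟨hnn, h0, h1, h2⟩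
  have hb1 : 0 < b + 1 := by linarith
  have hl : (b + 1)⁻¹ ≠ 0 := inv_ne_zero hb1.ne'
  obtain ⟨p, hfix, huniq, hconv⟩ := hN.exists_fixed_tendsto_iterate hC hcomplete
    (div_nonneg hθ0 hb1.le) ((div_lt_one hb1).mpr hθ) (hN.averagedMap_sub_le hb1 hT) 0
  refine ⟨(b + 1)⁻¹, inv_pos.mpr hb1, inv_le_one_of_one_le₀ (by linarith),
    p, (averagedMap_eq_self_iff hl).mp hfix,
    fun q hq => huniq q ((averagedMap_eq_self_iff hl).mpr hq), fun xs hxs => ?_⟩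
  have horbit : ∀ n, xs n = (averagedMap (b + 1)⁻¹ T)^[n] (xs 0) := by
    intro n
    induction n with
    | zero => rfl
    | succ n ih => rw [hxs, ih, Function.iterate_succ_apply']; rfl
  simpa only [← horbit] using hconv (xs 0)
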